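/- Let k, t, s, n be integers with k ≥ 2, 1 ≤ t ≤ k−1, both s and t even, s ≥ t+2, and 2n ≥ (2k+3)s + 2. Then C(n − (2k+1)s/2 − 1, 2) + s·((2k+1)s/2 + 1) < C(n − (2k+1)t/2 − 1, 2) + t·((2k+1)t/2 + 1), where C(m,2) = m(m−1)/2. -/
import Mathlib


/-- `C(m,2) = m(m−1)/2` (an integer, since `m(m−1)` is always even). -/
def C2 (m : ℤ) : ℤ := m * (m - 1) / 2

lemma two_C2 (m : ℤ) : 2 * C2 m = m * (m - 1) := by
  have h : (2 : ℤ) ∣ m * (m - 1) := by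
    rcases Int.even_or_odd m with h | h
    · exact Dvd.dvd.mul_right h.two_dvd _
    · exact Dvd.dvd.mul_left (by simpa using (h.sub_odd odd_one).two_dvd) _
  unfold C2
  exact Int.mul_ediv_cancel' h

/-- Case 2 (`s` and `t` both even, so `(2k+1)s/2` and `(2k+1)t/2` are integers) in the
proof of Theorem 1.3: for integers `k ≥ 2`, `1 ≤ t ≤ k−1`, `s` and `t` even, `s ≥ t+2` and
`2n ≥ (2k+3)s + 2`, one has
`C(n − (2k+1)s/2 − 1, 2) + s((2k+1)s/2 + 1) < C(n − (2k+1)t/2 − 1, 2) + t((2k+1)t/2 + 1)`. -/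
theorem stmt10 (k t s n s' t' : ℤ) (hk : 2 ≤ k) (ht1 : 1 ≤ t) (htk : t ≤ k - 1)
    (hs : s = 2 * s') (ht : t = 2 * t') (hts : t + 2 ≤ s)
    (hn1 : (2 * k + 3) * s + 2 ≤ 2 * n) :
    C2 (n - (2 * k + 1) * s' - 1) + s * ((2 * k + 1) * s' + 1)
      < C2 (n - (2 * k + 1) * t' - 1) + t * ((2 * k + 1) * t' + 1) := by
  have h1 := two_C2 (n - (2 * k + 1) * s' - 1)
  have h2 := two_C2 (n - (2 * k + 1) * t' - 1)
  subst hs ht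
  have hu : 1 ≤ s' - t' := by linarith
  have haux : (0:ℤ) ≤ (2 * k + 1) * (s' - t' - 1) := mul_nonneg (by linarith) (by linarith)
  have hE : 2 ≤ 2 * n - (2 * k + 5) * (s' + t') - 3 := by nlinarith
  have key : 2 * ((C2 (n - (2 * k + 1) * t' - 1) + 2 * t' * ((2 * k + 1) * t' + 1))
      - (C2 (n - (2 * k + 1) * s' - 1) + 2 * s' * ((2 * k + 1) * s' + 1)))
      = (s' - t') * ((2 * k + 1) * (2 * n - (2 * k + 5) * (s' + t') - 3) - 4) := by
    linear_combination h2 - h1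
  nlinarith [mul_le_mul_of_nonneg_left hE (by linarith : (0:ℤ) ≤ 2 * k + 1),
    mul_pos (by linarith : (0:ℤ) < s' - t')
      (by nlinarith : (0:ℤ) < (2 * k + 1) * (2 * n - (2 * k + 5) * (s' + t') - 3) - 4)]
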